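/- Let J be a nonempty finite index set (the dataset of objects). For each j ∈ J, let p_{j,1}, p_{j,2}, ... be independent identically distributed random variables with values in the interval [ε_j, 1] for some ε_j > 0, with mean μ_j = E[p_{j,1}] and variance σ_j² = Var(p_{j,1}) (no independence across different j is assumed). Define NLL_n = ∑_{j ∈ J} E[−log((1/n)·∑_{i=1}^n p_{j,i})]. Then NLL_n = c + b/n + O(1/n²) as n → ∞, where c = −∑_{j ∈ J} log μ_j and b = ∑_{j ∈ J} σ_j²/(2·μ_j²) ≥ 0, with b > 0 whenever σ_j² > 0 for at least one j. -/

import Mathlib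

/-!
Write `p̄ₙ = μ + Sₙ / n` with `Sₙ = ∑_{i<n} (pᵢ - μ)`. Expanding `-log` to third order at `μ`,
`-log p̄ₙ = -log μ - Sₙ/(μn) + Sₙ²/(2μ²n²) - Sₙ³/(3μ³n³) + R(p̄ₙ)`, where the remainder satisfies
`0 ≤ R(x) ≤ (x - μ)⁴ / (4ε⁴)` on `[ε, ∞)`. Independence gives `E Sₙ = 0`, `E Sₙ² = nσ²`,
`E Sₙ³ = n m₃` and `E Sₙ⁴ = n m₄ + 3n(n-1)σ⁴ ≤ 3n²`, so the expectation is
`-log μ + σ²/(2μ²n) + O(1/n²)`. Summing over the finitely many objects gives the claim.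
-/

open MeasureTheory ProbabilityTheory Finset

theorem nonneg_of_hasDerivAt_of_mul_sub_nonneg {s : Set ℝ} (hs : s.OrdConnected) {F F' : ℝ → ℝ}
    {a x : ℝ} (ha : a ∈ s) (hx : x ∈ s) (hF : ∀ y ∈ s, HasDerivAt F (F' y) y) (hFa : F a = 0)
    (hsign : ∀ y ∈ s, 0 ≤ (y - a) * F' y) : 0 ≤ F x := by
  have hderiv {l u : ℝ} (hl : l ∈ s) (hu : u ∈ s) :
      ∀ y ∈ interior (Set.Icc l u), HasDerivWithinAt F (F' y) (interior (Set.Icc l u)) y :=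
    fun y hy => (hF y (hs.out hl hu (interior_subset hy))).hasDerivWithinAt
  have hcont {l u : ℝ} (hl : l ∈ s) (hu : u ∈ s) : ContinuousOn F (Set.Icc l u) := fun y hy =>
    (hF y (hs.out hl hu hy)).continuousAt.continuousWithinAt
  rcases le_total a x with hax | hxa
  · refine hFa ▸ monotoneOn_of_hasDerivWithinAt_nonneg (convex_Icc a x) (hcont ha hx)
      (hderiv ha hx) (fun y hy => ?_) ⟨le_rfl, hax⟩ ⟨hax, le_rfl⟩ hax
    rw [interior_Icc] at hy
    exact nonneg_of_mul_nonneg_right (hsign y (hs.out ha hx (Set.Ioo_subset_Icc_self hy)))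
      (sub_pos.2 hy.1)
  · refine hFa ▸ antitoneOn_of_hasDerivWithinAt_nonpos (convex_Icc x a) (hcont hx ha)
      (hderiv hx ha) (fun y hy => ?_) ⟨le_rfl, hxa⟩ ⟨hxa, le_rfl⟩ hxa
    rw [interior_Icc] at hy
    exact nonpos_of_mul_nonneg_right (hsign y (hs.out hx ha (Set.Ioo_subset_Icc_self hy)))
      (sub_neg.2 hy.2)

noncomputable def negLogTaylorRem (μ x : ℝ) : ℝ :=
  -Real.log x - (-Real.log μ - (x - μ) / μ + (x - μ) ^ 2 / (2 * μ ^ 2) - (x - μ) ^ 3 / (3 * μ ^ 3))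

theorem negLogTaylorRem_self (μ : ℝ) : negLogTaylorRem μ μ = 0 := by
  simp [negLogTaylorRem]

theorem measurable_negLogTaylorRem (μ : ℝ) : Measurable (negLogTaylorRem μ) := by
  unfold negLogTaylorRem
  fun_prop

theorem hasDerivAt_negLogTaylorRem {μ x : ℝ} (hμ : μ ≠ 0) (hx : x ≠ 0) :
    HasDerivAt (negLogTaylorRem μ) ((x - μ) ^ 3 / (μ ^ 3 * x)) x := by
  have hlin : HasDerivAt (fun y : ℝ => y - μ) 1 x := (hasDerivAt_id x).sub_const μ
  have h := (Real.hasDerivAt_log hx).neg.sub (((((hasDerivAt_const x (-Real.log μ)).sub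
    (hlin.div_const μ)).add ((hlin.pow 2).div_const (2 * μ ^ 2))).sub
    ((hlin.pow 3).div_const (3 * μ ^ 3))))
  refine h.congr_deriv ?_
  field_simp
  ring

theorem negLogTaylorRem_nonneg {μ x : ℝ} (hμ : 0 < μ) (hx : 0 < x) :
    0 ≤ negLogTaylorRem μ x :=
  nonneg_of_hasDerivAt_of_mul_sub_nonneg Set.ordConnected_Ioi hμ hx
    (fun y hy => hasDerivAt_negLogTaylorRem hμ.ne' (ne_of_gt hy)) (negLogTaylorRem_self μ)
    fun y hy => by
      have : 0 < y := hy
      calc (0 : ℝ) ≤ (y - μ) ^ 4 / (μ ^ 3 * y) := by positivity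
        _ = _ := by ring

theorem negLogTaylorRem_le {ε μ x : ℝ} (hε : 0 < ε) (hεμ : ε ≤ μ) (hεx : ε ≤ x) :
    negLogTaylorRem μ x ≤ (x - μ) ^ 4 / (4 * ε ^ 4) := by
  have hμ : 0 < μ := hε.trans_le hεμ
  refine sub_nonneg.1 <| nonneg_of_hasDerivAt_of_mul_sub_nonneg Set.ordConnected_Ici hεμ hεx
    (F := fun x => (x - μ) ^ 4 / (4 * ε ^ 4) - negLogTaylorRem μ x)
    (F' := fun y => (y - μ) ^ 3 / ε ^ 4 - (y - μ) ^ 3 / (μ ^ 3 * y)) (fun y hy => ?_)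
    (by simp [negLogTaylorRem_self]) fun y hy => ?_
  · have hy : 0 < y := hε.trans_le hy
    refine (((((hasDerivAt_id' y).sub_const μ).pow 4).div_const _).sub
      (hasDerivAt_negLogTaylorRem hμ.ne' hy.ne')).congr_deriv ?_
    field_simp
    ring
  · have hy : ε ≤ y := hy
    have hμy : ε ^ 4 ≤ μ ^ 3 * y := calc
      ε ^ 4 = ε ^ 3 * ε := by ring
      _ ≤ μ ^ 3 * y := by gcongr
    have : 0 ≤ 1 / ε ^ 4 - 1 / (μ ^ 3 * y) :=
      sub_nonneg.2 (one_div_le_one_div_of_le (by positivity) hμy)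
    calc (0 : ℝ) ≤ (y - μ) ^ 4 * (1 / ε ^ 4 - 1 / (μ ^ 3 * y)) := by positivity
      _ = _ := by ring

theorem abs_sum_range_le {f : ℕ → ℝ} {C : ℝ} (hf : ∀ i, |f i| ≤ C) (n : ℕ) :
    |∑ i ∈ range n, f i| ≤ n * C := calc
  |∑ i ∈ range n, f i| ≤ ∑ i ∈ range n, |f i| := abs_sum_le_sum_abs _ _
  _ ≤ n * C := by simpa using sum_le_sum fun i (_ : i ∈ range n) => hf i

theorem le_add_sum_range_div {f : ℕ → ℝ} {ε μ : ℝ} (hf : ∀ i, ε ≤ μ + f i) {n : ℕ} (hn : 0 < n) :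
    ε ≤ μ + (∑ i ∈ range n, f i) / n := by
  have hn' : (0 : ℝ) < n := Nat.cast_pos.2 hn
  have : n * ε ≤ n * μ + ∑ i ∈ range n, f i := by
    simpa [sum_add_distrib, mul_comm] using sum_le_sum fun i (_ : i ∈ range n) => hf i
  rw [← sub_le_iff_le_add', le_div_iff₀ hn']
  linarith

section Integrals

variable {Ω : Type*} [MeasurableSpace Ω] {P : Measure Ω}

theorem integrable_pow_of_abs_le [IsFiniteMeasure P] {f : Ω → ℝ} (hf : Measurable f) {C : ℝ}
    (hC : ∀ ω, |f ω| ≤ C) (k : ℕ) : Integrable (fun ω => f ω ^ k) P :=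
  Integrable.of_bound (hf.pow_const k).aestronglyMeasurable (C ^ k) <| ae_of_all _ fun ω => by
    rw [Real.norm_eq_abs, abs_pow]
    exact pow_le_pow_left₀ (abs_nonneg _) (hC ω) k

theorem abs_integral_pow_le_one [IsProbabilityMeasure P] {f : Ω → ℝ} (hf : ∀ ω, |f ω| ≤ 1)
    (k : ℕ) : |∫ ω, f ω ^ k ∂P| ≤ 1 := by
  simpa using norm_integral_le_of_norm_le_const (μ := P) (f := fun ω => f ω ^ k) (C := 1)
    (ae_of_all _ fun ω => by simpa [abs_pow] using pow_le_one₀ (abs_nonneg _) (hf ω) (n := k))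

theorem integral_mem_Icc [IsProbabilityMeasure P] {f : Ω → ℝ} (hf : AEMeasurable f P) {a b : ℝ}
    (hab : ∀ ω, f ω ∈ Set.Icc a b) : ∫ ω, f ω ∂P ∈ Set.Icc a b :=
  Convex.integral_mem (convex_Icc a b) isClosed_Icc (ae_of_all _ hab)
    (Integrable.of_mem_Icc a b hf (ae_of_all _ hab))

theorem integrable_negLogTaylorRem_add [IsFiniteMeasure P] {Z : Ω → ℝ} {ε μ C : ℝ}
    (hZ : Measurable Z) (hZC : ∀ ω, |Z ω| ≤ C) (hε : 0 < ε) (hεμ : ε ≤ μ)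
    (hεZ : ∀ ω, ε ≤ μ + Z ω) : Integrable (fun ω => negLogTaylorRem μ (μ + Z ω)) P :=
  ((integrable_pow_of_abs_le hZ hZC 4).div_const (4 * ε ^ 4)).mono'
    ((measurable_negLogTaylorRem μ).comp (by fun_prop)).aestronglyMeasurable <|
    ae_of_all _ fun ω => by
      rw [Real.norm_eq_abs, abs_of_nonneg (negLogTaylorRem_nonneg (hε.trans_le hεμ)
        (hε.trans_le (hεZ ω)))]
      simpa using negLogTaylorRem_le hε hεμ (hεZ ω)

theorem integral_negLogTaylorRem_add_le [IsFiniteMeasure P] {Z : Ω → ℝ} {ε μ C : ℝ}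
    (hZ : Measurable Z) (hZC : ∀ ω, |Z ω| ≤ C) (hε : 0 < ε) (hεμ : ε ≤ μ)
    (hεZ : ∀ ω, ε ≤ μ + Z ω) :
    ∫ ω, negLogTaylorRem μ (μ + Z ω) ∂P ≤ (∫ ω, Z ω ^ 4 ∂P) / (4 * ε ^ 4) := by
  rw [← integral_div]
  exact integral_mono (integrable_negLogTaylorRem_add hZ hZC hε hεμ hεZ)
    ((integrable_pow_of_abs_le hZ hZC 4).div_const _)
    fun ω => by simpa using negLogTaylorRem_le hε hεμ (hεZ ω)

theorem integral_neg_log_add_eq [IsProbabilityMeasure P] (μ : ℝ) {Z : Ω → ℝ} {C : ℝ}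
    (hZ : Measurable Z) (hZC : ∀ ω, |Z ω| ≤ C)
    (hR : Integrable (fun ω => negLogTaylorRem μ (μ + Z ω)) P) :
    ∫ ω, -Real.log (μ + Z ω) ∂P =
      -Real.log μ - (∫ ω, Z ω ∂P) / μ + (∫ ω, Z ω ^ 2 ∂P) / (2 * μ ^ 2)
        - (∫ ω, Z ω ^ 3 ∂P) / (3 * μ ^ 3) + ∫ ω, negLogTaylorRem μ (μ + Z ω) ∂P := by
  have hint := integrable_pow_of_abs_le (P := P) hZ hZC
  have hZ1 : Integrable Z P := by simpa using hint 1
  have hexpand : ∀ ω, -Real.log (μ + Z ω) = -Real.log μ - Z ω / μ + Z ω ^ 2 / (2 * μ ^ 2)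
      - Z ω ^ 3 / (3 * μ ^ 3) + negLogTaylorRem μ (μ + Z ω) := fun ω => by
    simp only [negLogTaylorRem, add_sub_cancel_left]
    ring
  simp_rw [hexpand]
  rw [integral_add _ hR, integral_sub _ ((hint 3).div_const _),
    integral_add _ ((hint 2).div_const _), integral_sub (integrable_const _) (hZ1.div_const _)]
  · simp [integral_div]
  all_goals fun_prop

theorem ProbabilityTheory.IndepFun.integral_add_pow {X Y : Ω → ℝ} (hXY : IndepFun X Y P)
    (hX : ∀ m : ℕ, Integrable (fun ω => X ω ^ m) P)
    (hY : ∀ m : ℕ, Integrable (fun ω => Y ω ^ m) P) (k : ℕ) :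
    ∫ ω, (X ω + Y ω) ^ k ∂P =
      ∑ m ∈ range (k + 1), (∫ ω, X ω ^ m ∂P) * (∫ ω, Y ω ^ (k - m) ∂P) * k.choose m := by
  have hpow (m l : ℕ) : IndepFun (fun ω => X ω ^ m) (fun ω => Y ω ^ l) P :=
    hXY.comp (measurable_id.pow_const m) (measurable_id.pow_const l)
  simp_rw [add_pow]
  rw [integral_finsetSum (f := fun m ω => X ω ^ m * Y ω ^ (k - m) * k.choose m) _ fun m _ =>
    ((hpow m (k - m)).integrable_mul (hX m) (hY (k - m))).mul_const _]
  refine sum_congr rfl fun m _ => ?_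
  rw [integral_mul_const, (hpow m (k - m)).integral_fun_mul_eq_mul_integral
    (hX m).aestronglyMeasurable (hY (k - m)).aestronglyMeasurable]

section PartialSums

variable [IsProbabilityMeasure P] {Y : ℕ → Ω → ℝ} {C : ℝ}

theorem integral_sum_range_succ_pow (hY : iIndepFun Y P) (hmeas : ∀ i, Measurable (Y i))
    (hC : ∀ i ω, |Y i ω| ≤ C) (n k : ℕ) :
    ∫ ω, (∑ i ∈ range (n + 1), Y i ω) ^ k ∂P =
      ∑ m ∈ range (k + 1),
        (∫ ω, (∑ i ∈ range n, Y i ω) ^ m ∂P) * (∫ ω, Y n ω ^ (k - m) ∂P) * k.choose m := by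
  have hind : IndepFun (fun ω => ∑ i ∈ range n, Y i ω) (Y n) P := by
    simpa [← Finset.sum_apply] using hY.indepFun_sum_range_succ hmeas n
  simp_rw [fun ω => sum_range_succ (fun i => Y i ω) n]
  exact hind.integral_add_pow
    (integrable_pow_of_abs_le (by fun_prop) fun ω => abs_sum_range_le (hC · ω) n)
    (integrable_pow_of_abs_le (hmeas n) (hC n)) k

theorem integral_sum_range_eq_zero (hmeas : ∀ i, Measurable (Y i)) (hC : ∀ i ω, |Y i ω| ≤ C)
    (h1 : ∀ i, ∫ ω, Y i ω ∂P = 0) (n : ℕ) : ∫ ω, ∑ i ∈ range n, Y i ω ∂P = 0 := by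
  rw [integral_finsetSum _ fun i _ => by simpa using integrable_pow_of_abs_le (hmeas i) (hC i) 1]
  simp [h1]

theorem integral_sum_range_pow_two (hY : iIndepFun Y P) (hmeas : ∀ i, Measurable (Y i))
    (hC : ∀ i ω, |Y i ω| ≤ C) (h1 : ∀ i, ∫ ω, Y i ω ∂P = 0) {m₂ : ℝ}
    (h2 : ∀ i, ∫ ω, Y i ω ^ 2 ∂P = m₂) (n : ℕ) :
    ∫ ω, (∑ i ∈ range n, Y i ω) ^ 2 ∂P = n * m₂ := by
  induction n with
  | zero => simp
  | succ n ih =>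
    rw [integral_sum_range_succ_pow hY hmeas hC]
    simp [sum_range_succ, ih, h1, h2, integral_sum_range_eq_zero hmeas hC h1]
    ring

theorem integral_sum_range_pow_three (hY : iIndepFun Y P) (hmeas : ∀ i, Measurable (Y i))
    (hC : ∀ i ω, |Y i ω| ≤ C) (h1 : ∀ i, ∫ ω, Y i ω ∂P = 0) {m₃ : ℝ}
    (h3 : ∀ i, ∫ ω, Y i ω ^ 3 ∂P = m₃) (n : ℕ) :
    ∫ ω, (∑ i ∈ range n, Y i ω) ^ 3 ∂P = n * m₃ := by
  induction n with
  | zero => simp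
  | succ n ih =>
    rw [integral_sum_range_succ_pow hY hmeas hC]
    simp [sum_range_succ, ih, h1, h3, integral_sum_range_eq_zero hmeas hC h1]
    ring

theorem integral_sum_range_pow_four (hY : iIndepFun Y P) (hmeas : ∀ i, Measurable (Y i))
    (hC : ∀ i ω, |Y i ω| ≤ C) (h1 : ∀ i, ∫ ω, Y i ω ∂P = 0) {m₂ m₄ : ℝ}
    (h2 : ∀ i, ∫ ω, Y i ω ^ 2 ∂P = m₂) (h4 : ∀ i, ∫ ω, Y i ω ^ 4 ∂P = m₄) (n : ℕ) :
    ∫ ω, (∑ i ∈ range n, Y i ω) ^ 4 ∂P = n * m₄ + 3 * n * (n - 1) * m₂ ^ 2 := by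
  induction n with
  | zero => simp
  | succ n ih =>
    rw [integral_sum_range_succ_pow hY hmeas hC]
    simp [sum_range_succ, ih, h1, h2, h4, integral_sum_range_eq_zero hmeas hC h1,
      integral_sum_range_pow_two hY hmeas hC h1 h2, Nat.choose]
    ring

theorem integral_sum_range_pow_four_le (hY : iIndepFun Y P) (hmeas : ∀ i, Measurable (Y i))
    (hY1 : ∀ i ω, |Y i ω| ≤ 1) (h1 : ∀ i, ∫ ω, Y i ω ∂P = 0)
    (hmom : ∀ i k, ∫ ω, Y i ω ^ k ∂P = ∫ ω, Y 0 ω ^ k ∂P) (n : ℕ) :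
    ∫ ω, (∑ i ∈ range n, Y i ω) ^ 4 ∂P ≤ 3 * n ^ 2 := by
  rw [integral_sum_range_pow_four hY hmeas hY1 h1 (hmom · 2) (hmom · 4)]
  have hm₂ : 0 ≤ ∫ ω, Y 0 ω ^ 2 ∂P := integral_nonneg fun ω => sq_nonneg _
  have hm₂_le := (le_abs_self _).trans (abs_integral_pow_le_one (P := P) (hY1 0) 2)
  have hm₄_le := (le_abs_self _).trans (abs_integral_pow_le_one (P := P) (hY1 0) 4)
  rcases n.eq_zero_or_pos with rfl | hn
  · simp
  have hn1 : (1 : ℝ) ≤ n := Nat.one_le_cast.2 hn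
  have h₄ : n * ∫ ω, Y 0 ω ^ 4 ∂P ≤ n := mul_le_of_le_one_right (Nat.cast_nonneg n) hm₄_le
  have h₂ : 3 * n * (n - 1) * (∫ ω, Y 0 ω ^ 2 ∂P) ^ 2 ≤ 3 * n * (n - 1) :=
    mul_le_of_le_one_right (by nlinarith) (pow_le_one₀ hm₂ hm₂_le)
  nlinarith

end PartialSums
theorem abs_integral_neg_log_add_sampleMean_sub_le [IsProbabilityMeasure P] {Y : ℕ → Ω → ℝ}
    (hY : iIndepFun Y P) (hmeas : ∀ i, Measurable (Y i)) (hY1 : ∀ i ω, |Y i ω| ≤ 1)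
    (h1 : ∀ i, ∫ ω, Y i ω ∂P = 0) (hmom : ∀ i k, ∫ ω, Y i ω ^ k ∂P = ∫ ω, Y 0 ω ^ k ∂P)
    {ε μ : ℝ} (hε : 0 < ε) (hεμ : ε ≤ μ) (hεY : ∀ i ω, ε ≤ μ + Y i ω) {n : ℕ} (hn : 0 < n) :
    |∫ ω, -Real.log (μ + (∑ i ∈ range n, Y i ω) / n) ∂P - -Real.log μ
        - (∫ ω, Y 0 ω ^ 2 ∂P) / (2 * μ ^ 2) / n| ≤ (1 / (3 * ε ^ 3) + 3 / (4 * ε ^ 4)) / n ^ 2 := by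
  set S : Ω → ℝ := fun ω => ∑ i ∈ range n, Y i ω
  set m₃ := ∫ ω, Y 0 ω ^ 3 ∂P
  have hn' : (0 : ℝ) < n := Nat.cast_pos.2 hn
  have hμ : 0 < μ := hε.trans_le hεμ
  have hZmeas : Measurable fun ω => S ω / n := by fun_prop
  have hZ1 (ω : Ω) : |S ω / n| ≤ 1 := by
    rw [abs_div, Nat.abs_cast, div_le_one hn']
    simpa using abs_sum_range_le (hY1 · ω) n
  have hεZ (ω : Ω) : ε ≤ μ + S ω / n := le_add_sum_range_div (hεY · ω) hn
  have hR_nonneg : 0 ≤ ∫ ω, negLogTaylorRem μ (μ + S ω / n) ∂P :=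
    integral_nonneg fun ω => negLogTaylorRem_nonneg hμ (hε.trans_le (hεZ ω))
  have hR_le : ∫ ω, negLogTaylorRem μ (μ + S ω / n) ∂P ≤ 3 / (4 * ε ^ 4) / n ^ 2 := calc
    _ ≤ (∫ ω, (S ω / n) ^ 4 ∂P) / (4 * ε ^ 4) :=
      integral_negLogTaylorRem_add_le hZmeas hZ1 hε hεμ hεZ
    _ ≤ 3 * n ^ 2 / n ^ 4 / (4 * ε ^ 4) := by
      simp_rw [div_pow, integral_div]
      gcongr
      exact integral_sum_range_pow_four_le hY hmeas hY1 h1 hmom n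
    _ = 3 / (4 * ε ^ 4) / n ^ 2 := by field_simp
  have hm₃_le : |m₃ / (3 * μ ^ 3 * n ^ 2)| ≤ 1 / (3 * ε ^ 3) / n ^ 2 := by
    rw [abs_div, abs_of_pos (by positivity : (0 : ℝ) < 3 * μ ^ 3 * n ^ 2), div_div]
    gcongr
    exact abs_integral_pow_le_one (P := P) (hY1 0) 3
  have hm₁ : ∫ ω, S ω ∂P = 0 := integral_sum_range_eq_zero hmeas hY1 h1 n
  have hm₂ : ∫ ω, S ω ^ 2 ∂P = n * ∫ ω, Y 0 ω ^ 2 ∂P :=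
    integral_sum_range_pow_two hY hmeas hY1 h1 (hmom · 2) n
  have hm₃ : ∫ ω, S ω ^ 3 ∂P = n * m₃ := integral_sum_range_pow_three hY hmeas hY1 h1 (hmom · 3) n
  rw [integral_neg_log_add_eq μ hZmeas hZ1
    (integrable_negLogTaylorRem_add hZmeas hZ1 hε hεμ hεZ)]
  simp_rw [div_pow, integral_div, hm₁, hm₂, hm₃]
  calc _ = |∫ ω, negLogTaylorRem μ (μ + S ω / n) ∂P - m₃ / (3 * μ ^ 3 * n ^ 2)| := by
        congr 1
        field_simp
        ring
    _ ≤ |∫ ω, negLogTaylorRem μ (μ + S ω / n) ∂P| + |m₃ / (3 * μ ^ 3 * n ^ 2)| := abs_sub _ _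
    _ ≤ 3 / (4 * ε ^ 4) / n ^ 2 + 1 / (3 * ε ^ 3) / n ^ 2 := by
        rw [abs_of_nonneg hR_nonneg]
        exact add_le_add hR_le hm₃_le
    _ = _ := by ring

theorem abs_integral_neg_log_sampleMean_sub_le [IsProbabilityMeasure P] {p : ℕ → Ω → ℝ} {ε : ℝ}
    (hε : 0 < ε) (hmeas : ∀ i, Measurable (p i)) (hrange : ∀ i ω, p i ω ∈ Set.Icc ε 1)
    (hindep : iIndepFun p P) (hident : ∀ i, IdentDistrib (p i) (p 0) P P) {n : ℕ} (hn : 0 < n) :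
    |∫ ω, -Real.log ((∑ i ∈ range n, p i ω) / n) ∂P - -Real.log (∫ ω, p 0 ω ∂P)
        - variance (p 0) P / (2 * (∫ ω, p 0 ω ∂P) ^ 2) / n|
      ≤ (1 / (3 * ε ^ 3) + 3 / (4 * ε ^ 4)) / n ^ 2 := by
  set μ := ∫ ω, p 0 ω ∂P
  have hint (i : ℕ) : Integrable (p i) P :=
    Integrable.of_mem_Icc ε 1 (hmeas i).aemeasurable (ae_of_all _ (hrange i))
  have hμ : μ ∈ Set.Icc ε 1 := integral_mem_Icc (hmeas 0).aemeasurable (hrange 0)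
  have hY1 (i : ℕ) (ω : Ω) : |p i ω - μ| ≤ 1 :=
    abs_le.2 ⟨by linarith [(hrange i ω).1, hμ.2], by linarith [(hrange i ω).2, hμ.1]⟩
  have h1 (i : ℕ) : ∫ ω, p i ω - μ ∂P = 0 := by
    simp [integral_sub (hint i) (integrable_const μ), (hident i).integral_eq, μ]
  have hmom (i k : ℕ) : ∫ ω, (p i ω - μ) ^ k ∂P = ∫ ω, (p 0 ω - μ) ^ k ∂P :=
    ((hident i).comp (by fun_prop : Measurable fun x : ℝ => (x - μ) ^ k)).integral_eq
  have hmean (ω : Ω) : (∑ i ∈ range n, p i ω) / n = μ + (∑ i ∈ range n, (p i ω - μ)) / n := by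
    rw [sum_sub_distrib, sum_const, card_range, nsmul_eq_mul]
    field_simp
    ring
  simp_rw [hmean, variance_eq_integral (hmeas 0).aemeasurable]
  exact abs_integral_neg_log_add_sampleMean_sub_le
    (hindep.comp (fun _ x => x - μ) fun _ => measurable_sub_const μ)
    (fun i => (hmeas i).sub_const μ) hY1 h1 hmom hε hμ.1
    (fun i ω => by simp [(hrange i ω).1]) hn

end Integrals

theorem dataset_nll_power_law_general
    {Ω : Type*} [MeasurableSpace Ω] (P : Measure Ω) [IsProbabilityMeasure P]
    {J : Type*} [Fintype J]
    (ε : J → ℝ) (hε : ∀ j, 0 < ε j)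
    (p : J → ℕ → Ω → ℝ) (hmeas : ∀ j i, Measurable (p j i))
    (hrange : ∀ j i ω, p j i ω ∈ Set.Icc (ε j) 1)
    (hindep : ∀ j, iIndepFun (p j) P)
    (hident : ∀ j i, IdentDistrib (p j i) (p j 0) P P)
    (μ σ2 : J → ℝ) (hμ : ∀ j, μ j = ∫ ω, p j 0 ω ∂P)
    (hσ2 : ∀ j, σ2 j = variance (p j 0) P)
    (c b : ℝ) (hc : c = -∑ j, Real.log (μ j)) (hb : b = ∑ j, σ2 j / (2 * μ j ^ 2)) :
    (∃ C > (0 : ℝ), ∀ n : ℕ, 0 < n →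
      |(∑ j, ∫ ω, -Real.log ((∑ i ∈ Finset.range n, p j i ω) / n) ∂P) - c - b / n|
        ≤ C / (n : ℝ) ^ 2) ∧
    0 ≤ b ∧ ((∃ j, 0 < σ2 j) → 0 < b) := by
  set K : J → ℝ := fun j => 1 / (3 * ε j ^ 3) + 3 / (4 * ε j ^ 4)
  have hK : 0 ≤ ∑ j, K j := sum_nonneg fun j _ => by have := hε j; positivity
  have hμ_pos (j : J) : 0 < μ j :=
    (hε j).trans_le (hμ j ▸ integral_mem_Icc (hmeas j 0).aemeasurable (hrange j 0)).1
  have hterm_nonneg (j : J) : 0 ≤ σ2 j / (2 * μ j ^ 2) :=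
    div_nonneg (hσ2 j ▸ variance_nonneg _ _) (by have := hμ_pos j; positivity)
  refine ⟨⟨1 + ∑ j, K j, by linarith, fun n hn => ?_⟩, hb ▸ sum_nonneg fun j _ => hterm_nonneg j,
    fun ⟨j, hj⟩ => hb ▸ sum_pos' (fun j _ => hterm_nonneg j)
      ⟨j, mem_univ j, div_pos hj (by have := hμ_pos j; positivity)⟩⟩
  calc _ = |∑ j, (∫ ω, -Real.log ((∑ i ∈ range n, p j i ω) / n) ∂P - -Real.log (μ j)
        - σ2 j / (2 * μ j ^ 2) / n)| := by
        rw [hc, hb, sum_sub_distrib, sum_sub_distrib, sum_div, sum_neg_distrib]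
    _ ≤ ∑ j, K j / n ^ 2 := (abs_sum_le_sum_abs _ _).trans <| sum_le_sum fun j _ => by
        simpa only [hμ j, hσ2 j] using abs_integral_neg_log_sampleMean_sub_le (hε j) (hmeas j)
          (hrange j) (hindep j) (hident j) hn
    _ ≤ (1 + ∑ j, K j) / n ^ 2 := by
        rw [← sum_div]
        gcongr
        linarith

/-- Dataset-level consequence of Proposition 1: if, for every object `j` of a nonempty finite
dataset `J`, the correct-class probabilities `p j i` are i.i.d. in `i` with values in
`[ε j, 1]`, `ε j > 0`, mean `μ j` and variance `σ j ²`, then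
`NLL_n = ∑_j E[-log p̄_{j,n}]` satisfies `NLL_n = c + b/n + O(1/n²)` with
`c = -∑_j log (μ j)`, `b = ∑_j σ j ²/(2 μ j ²) ≥ 0`, and `b > 0` whenever some `σ j ² > 0`. -/
theorem dataset_nll_power_law
    {Ω : Type*} [MeasurableSpace Ω] (P : Measure Ω) [IsProbabilityMeasure P]
    {J : Type*} [Fintype J] [Nonempty J]
    (ε : J → ℝ) (hε : ∀ j, 0 < ε j)
    (p : J → ℕ → Ω → ℝ) (hmeas : ∀ j i, Measurable (p j i))
    (hrange : ∀ j i ω, p j i ω ∈ Set.Icc (ε j) 1)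
    (hindep : ∀ j, iIndepFun (p j) P)
    (hident : ∀ j i, IdentDistrib (p j i) (p j 0) P P)
    (μ σ2 : J → ℝ) (hμ : ∀ j, μ j = ∫ ω, p j 0 ω ∂P)
    (hσ2 : ∀ j, σ2 j = variance (p j 0) P)
    (c b : ℝ) (hc : c = -∑ j, Real.log (μ j)) (hb : b = ∑ j, σ2 j / (2 * μ j ^ 2)) :
    (∃ C > (0 : ℝ), ∀ n : ℕ, 0 < n →
      |(∑ j, ∫ ω, -Real.log ((∑ i ∈ Finset.range n, p j i ω) / n) ∂P) - c - b / n|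
        ≤ C / (n : ℝ) ^ 2) ∧
    0 ≤ b ∧ ((∃ j, 0 < σ2 j) → 0 < b) :=
  dataset_nll_power_law_general P ε hε p hmeas hrange hindep hident μ σ2 hμ hσ2 c b hc hb
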